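/- Let p be an odd prime, F a finite field of characteristic p with q = |F| elements, Tr : F → ZMod p the field trace, and ζ = exp(2πi/p) ∈ ℂ. On V = F × F define, for v = (v₁,v₂), the Weyl operator W v as the q×q complex matrix indexed by F with entries (W v)_{x,y} = ζ^{Tr(v₂·(x − 2⁻¹·v₁))} if y = x − v₁ and 0 otherwise, where 2⁻¹ is the inverse of 2 in F and the exponent is taken via the canonical lift of ZMod p to ℕ. Let T be a positive semidefinite q×q complex matrix with Tr T = 1, and define G_T(v) = (1/q) • (W v · T · (W v)ᴴ) for v ∈ V, and for a one-dimensional F-subspace L ⊆ V define the L-marginal G_T^L(v) = Σ_{l ∈ L} G_T(v + l). Then for any two distinct one-dimensional F-subspaces L ≠ L' of V and all v, w ∈ V: Tr(G_T^L(v) · G_T^{L'}(w)) = 1/q. (That is, the q+1 marginal POVMs {G_T^L} of the covariant phase-space observable G_T are pairwise mutually unbiased.) -/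

import Mathlib

open Matrix
open scoped Classical ComplexOrder

/-- The trace of a finite field `F` of characteristic `p` over its prime field `ZMod p`. -/
noncomputable def zmodTrace (p : ℕ) [Fact p.Prime] (F : Type*) [Field F] [Fintype F]
    [CharP F p] (x : F) : ZMod p :=
  letI : Algebra (ZMod p) F := ZMod.algebra F p
  Algebra.trace (ZMod p) F x

/-- The Weyl operator `W v` on `ℓ²(F)` associated with the phase-space point
`v = (v₁, v₂) ∈ F × F`:  `(W v) f (x) = ζ^Tr(v₂(x − 2⁻¹v₁)) f(x − v₁)` where
`ζ = exp(2πi/p)`. -/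
noncomputable def weyl (p : ℕ) [Fact p.Prime] (F : Type*) [Field F] [Fintype F]
    [DecidableEq F] [CharP F p] (v : F × F) : Matrix F F ℂ :=
  Matrix.of fun x y =>
    if y = x - v.1 then
      Complex.exp (2 * (Real.pi : ℂ) * Complex.I / (p : ℂ)) ^
        (zmodTrace p F (v.2 * (x - (2 : F)⁻¹ * v.1))).val
    else 0

/-- The covariant phase-space observable generated by `T`:
`G_T(v) = (1/q) • W v · T · (W v)ᴴ`. -/
noncomputable def phaseObs (p : ℕ) [Fact p.Prime] (F : Type*) [Field F] [Fintype F]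
    [DecidableEq F] [CharP F p] (T : Matrix F F ℂ) (v : F × F) : Matrix F F ℂ :=
  ((1 : ℂ) / (Fintype.card F : ℂ)) • (weyl p F v * T * (weyl p F v)ᴴ)

/-- The `L`-marginal of the covariant phase-space observable `G_T`:
`G_T^L(v) = Σ_{l ∈ L} G_T(v + l)`. -/
noncomputable def phaseObsMarginal (p : ℕ) [Fact p.Prime] (F : Type*) [Field F] [Fintype F]
    [DecidableEq F] [CharP F p] (T : Matrix F F ℂ) (L : Submodule F (F × F)) (v : F × F) :
    Matrix F F ℂ :=
  ∑ l : F × F, if l ∈ L then phaseObs p F T (v + l) else 0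

/-!
Conjugation by a Weyl operator acts on matrix entries by
`A x y ↦ ψ (u₂ (x - y)) * A (x - u₁) (y - u₁)`, where `ψ = ζ ^ Tr(·)` is a primitive additive
character of `F`. Hence `Tr (G a * G b)` depends only on `a - b`, and orthogonality of `ψ` gives
`∑ u, G u = Tr T • 1`. Two distinct lines `L`, `L'` of `F × F` are complementary, so
`(l, l') ↦ l - l'` is a bijection `L × L' ≃ F × F`, and the double sum
`Tr (G^L v * G^L' w) = ∑ l, ∑ l', Tr (G (v + l) * G (w + l'))` becomes
`∑ u, Tr (G u * G 0) = Tr T * Tr (G 0) = 1 / q`.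
-/

theorem Submodule.isCompl_of_finrank_eq_one_of_ne {K V : Type*} [DivisionRing K]
    [AddCommGroup V] [Module K V] [FiniteDimensional K V] (hV : Module.finrank K V = 2)
    {L L' : Submodule K V} (hL : Module.finrank K L = 1) (hL' : Module.finrank K L' = 1)
    (hne : L ≠ L') : IsCompl L L' :=
  (isCompl_iff_disjoint L L' (by omega)).2 <|
    (isAtom_iff_finrank_eq_one.2 hL).disjoint_of_ne (isAtom_iff_finrank_eq_one.2 hL') hne

theorem IsCompl.sum_sum_sub {R V M : Type*} [Ring R] [AddCommGroup V] [Module R V]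
    [Fintype V] [AddCommMonoid M] {L L' : Submodule R V} [Fintype L] [Fintype L']
    (h : IsCompl L L') (g : V → M) :
    ∑ x : L, ∑ y : L', g (x - y) = ∑ u, g u := by
  rw [← Fintype.sum_prod_type']
  refine Fintype.sum_equiv (((Equiv.refl L).prodCongr (Equiv.neg L')).trans
    (Submodule.prodEquivOfIsCompl L L' h).toEquiv) _ _ fun z => ?_
  simp [sub_eq_add_neg]

section Weyl

variable (p : ℕ) [Fact p.Prime] (F : Type*) [Field F] [Fintype F] [CharP F p]

noncomputable def traceChar : AddChar F ℂ :=
  letI : Algebra (ZMod p) F := ZMod.algebra F p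
  (AddChar.zmodChar p
    (Complex.isPrimitiveRoot_exp p (Fact.out : p.Prime).ne_zero).pow_eq_one).compAddMonoidHom
    (Algebra.trace (ZMod p) F).toAddMonoidHom

variable {p F}

theorem traceChar_isPrimitive : (traceChar p F).IsPrimitive := by
  refine AddChar.IsPrimitive.of_ne_one <| AddChar.ne_one_iff.2 ?_
  obtain ⟨b, hb⟩ : ∃ b : F, zmodTrace p F b ≠ 0 := by
    obtain rfl : ringChar F = p := ringChar.eq F p
    simpa [zmodTrace] using
      @FiniteField.trace_to_zmod_nondegenerate F _ _ (ZMod.algebra F _) 1 one_ne_zero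
  exact ⟨b, ((AddChar.zmodChar_primitive_of_primitive_root p
    (Complex.isPrimitiveRoot_exp p (Fact.out : p.Prime).ne_zero)).zmod_char_eq_one_iff p _).not.2 hb⟩

variable [DecidableEq F]

theorem weyl_apply (v : F × F) (x y : F) :
    weyl p F v x y =
      if y = x - v.1 then traceChar p F (v.2 * (x - (2 : F)⁻¹ * v.1)) else 0 :=
  rfl

theorem weyl_zero : weyl p F 0 = 1 := by
  ext x y
  simp [weyl_apply, one_apply, eq_comm]

theorem weyl_conj_apply (A : Matrix F F ℂ) (u : F × F) (x y : F) :
    (weyl p F u * A * (weyl p F u)ᴴ) x y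
      = traceChar p F (u.2 * (x - y)) * A (x - u.1) (y - u.1) := by
  simp only [mul_apply, weyl_apply, conjTranspose_apply, apply_ite star, star_zero, mul_ite,
    ite_mul, mul_zero, zero_mul, Finset.sum_ite_eq', Finset.mem_univ, if_true]
  rw [Complex.star_def, ← AddChar.map_neg_eq_conj, mul_right_comm, ← AddChar.map_add_eq_mul]
  ring_nf

theorem trace_weyl_conj_mul_weyl_conj (A B : Matrix F F ℂ) (a b : F × F) :
    ((weyl p F a * A * (weyl p F a)ᴴ) * (weyl p F b * B * (weyl p F b)ᴴ)).trace
      = ((weyl p F (a - b) * A * (weyl p F (a - b))ᴴ) * B).trace := by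
  simp only [trace, diag, mul_apply (M := weyl p F _ * _ * (weyl p F _)ᴴ),
    weyl_conj_apply]
  conv_rhs => rw [← (Equiv.subRight b.1).sum_comp]
  refine Finset.sum_congr rfl fun i _ => ?_
  conv_rhs => rw [← (Equiv.subRight b.1).sum_comp]
  refine Finset.sum_congr rfl fun j _ => ?_
  simp only [Equiv.subRight_apply, Prod.fst_sub, Prod.snd_sub, sub_sub_sub_cancel_right]
  rw [show (a.2 - b.2) * (i - j) = a.2 * (i - j) + b.2 * (j - i) by ring,
    AddChar.map_add_eq_mul]
  ring

theorem sum_weyl_conj (A : Matrix F F ℂ) :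
    ∑ u : F × F, weyl p F u * A * (weyl p F u)ᴴ = ((Fintype.card F : ℂ) * A.trace) • 1 := by
  ext x y
  simp only [Matrix.sum_apply, weyl_conj_apply, Fintype.sum_prod_type,
    ← Finset.sum_mul, AddChar.sum_mulShift _ traceChar_isPrimitive, sub_eq_zero]
  rcases eq_or_ne x y with rfl | hxy
  · simp only [if_true, Matrix.smul_apply, one_apply_eq, smul_eq_mul, mul_one, ← Finset.mul_sum]
    rw [trace, ← (Equiv.subLeft x).sum_comp]
    simp
  · simp [hxy]

end Weyl

section PhaseObs

variable {p : ℕ} [Fact p.Prime] {F : Type*} [Field F] [Fintype F] [DecidableEq F] [CharP F p]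
  (T : Matrix F F ℂ)

theorem phaseObs_zero : phaseObs p F T 0 = (1 / (Fintype.card F : ℂ)) • T := by
  simp [phaseObs, weyl_zero]

theorem trace_phaseObs_mul_phaseObs (a b : F × F) :
    (phaseObs p F T a * phaseObs p F T b).trace =
      (phaseObs p F T (a - b) * phaseObs p F T 0).trace := by
  rw [phaseObs_zero]
  simp only [phaseObs, smul_mul, Matrix.mul_smul, trace_smul, trace_weyl_conj_mul_weyl_conj]

theorem sum_phaseObs : ∑ v, phaseObs p F T v = T.trace • 1 := by
  have hq : (Fintype.card F : ℂ) ≠ 0 := Nat.cast_ne_zero.2 Fintype.card_ne_zero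
  simp only [phaseObs]
  rw [← Finset.smul_sum, sum_weyl_conj, smul_smul, one_div, inv_mul_cancel_left₀ hq]

theorem phaseObsMarginal_eq_sum (L : Submodule F (F × F)) (v : F × F) :
    phaseObsMarginal p F T L v = ∑ l : L, phaseObs p F T (v + l) := by
  rw [phaseObsMarginal, ← Finset.sum_filter]
  exact Finset.sum_subtype _ (by simp) _

end PhaseObs

theorem stmt18_general (p : ℕ) [Fact p.Prime] (F : Type*) [Field F] [Fintype F]
    [DecidableEq F] [CharP F p] (T : Matrix F F ℂ) (hTtr : T.trace = 1)
    (L L' : Submodule F (F × F)) (hL : Module.finrank F L = 1) (hL' : Module.finrank F L' = 1)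
    (hLL' : L ≠ L') (v w : F × F) :
    ((phaseObsMarginal p F T L v) * (phaseObsMarginal p F T L' w)).trace =
      1 / (Fintype.card F : ℂ) := by
  have hcompl : IsCompl L L' :=
    Submodule.isCompl_of_finrank_eq_one_of_ne (by simp) hL hL' hLL'
  calc ((phaseObsMarginal p F T L v) * (phaseObsMarginal p F T L' w)).trace
      = ∑ l : L, ∑ l' : L', (phaseObs p F T (v + l) * phaseObs p F T (w + l')).trace := by
        simp only [phaseObsMarginal_eq_sum, Fintype.sum_mul_sum, trace_sum]
    _ = ∑ l : L, ∑ l' : L',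
          (phaseObs p F T ((v - w) + (l - l')) * phaseObs p F T 0).trace := by
        refine Finset.sum_congr rfl fun l _ => Finset.sum_congr rfl fun l' _ => ?_
        rw [trace_phaseObs_mul_phaseObs, add_sub_add_comm]
    _ = ∑ u, (phaseObs p F T u * phaseObs p F T 0).trace := by
        rw [hcompl.sum_sum_sub fun u => (phaseObs p F T ((v - w) + u) * phaseObs p F T 0).trace]
        exact Equiv.sum_comp (Equiv.addLeft (v - w))
          fun u => (phaseObs p F T u * phaseObs p F T 0).trace
    _ = 1 / (Fintype.card F : ℂ) := by
        rw [← trace_sum, ← Finset.sum_mul, sum_phaseObs, smul_mul, one_mul, trace_smul,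
          phaseObs_zero, trace_smul, hTtr]
        simp

theorem stmt18 (p : ℕ) [Fact p.Prime] (hp2 : p ≠ 2) (F : Type*) [Field F] [Fintype F]
    [DecidableEq F] [CharP F p] (T : Matrix F F ℂ) (hT : T.PosSemidef) (hTtr : T.trace = 1)
    (L L' : Submodule F (F × F)) (hL : Module.finrank F L = 1) (hL' : Module.finrank F L' = 1)
    (hLL' : L ≠ L') (v w : F × F) :
    ((phaseObsMarginal p F T L v) * (phaseObsMarginal p F T L' w)).trace =
      1 / (Fintype.card F : ℂ) :=
  stmt18_general p F T hTtr L L' hL hL' hLL' v w
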